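/- For every integer n ≥ 2 and every substitution probability q with 0 < q < 1/8, the probability P_α(n,q) that Fitch's maximum parsimony algorithm applied to a character generated on the balanced binary tree of depth n (with substitution probability q on every edge, root in state α) returns the state set {α} satisfies P_α(n,q) > (1/2)·(1 − 2q/(1−2q) + √((1−8q)(1−4q))/(1−2q)²). -/

import Mathlib

/-!
Model: rooted binary phylogenetic trees whose edges carry substitution
probabilities, evolving binary characters (states `true` = α, `false` = β)
under the two-state symmetric (Neyman) model, and Fitch's maximum parsimony
algorithm.
-/

/-- A rooted binary tree; an internal node records the substitution
probabilities on the edges to its two children. -/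
inductive PTree where
  | leaf : PTree
  | node (p₁ p₂ : ℝ) (t₁ t₂ : PTree) : PTree

/-- The type of binary characters on a tree: an assignment of a state
(`true` = α, `false` = β) to each leaf. -/
def PTree.Char : PTree → Type
  | .leaf => Bool
  | .node _ _ t₁ t₂ => t₁.Char × t₂.Char

instance PTree.Char.instFintype : (t : PTree) → Fintype t.Char
  | .leaf => inferInstanceAs (Fintype Bool)
  | .node _ _ t₁ t₂ =>
      letI := PTree.Char.instFintype t₁
      letI := PTree.Char.instFintype t₂
      inferInstanceAs (Fintype (_ × _))

instance PTree.Char.instDecidableEq : (t : PTree) → DecidableEq t.Char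
  | .leaf => inferInstanceAs (DecidableEq Bool)
  | .node _ _ t₁ t₂ =>
      letI := PTree.Char.instDecidableEq t₁
      letI := PTree.Char.instDecidableEq t₂
      inferInstanceAs (DecidableEq (_ × _))

/-- Single-edge transition probability of the two-state symmetric model:
conditional on the parent being in state `s`, the child is in state `s'`
with probability `1 - p` if `s' = s` and `p` otherwise. -/
def transProb (p : ℝ) (s s' : Bool) : ℝ := if s' = s then 1 - p else p

/-- `t.charProb s c` is the probability that the character `c` is generated
at the leaves of `t` conditional on the root of `t` being in state `s`
(substitutions happen independently across edges). -/
def PTree.charProb : (t : PTree) → Bool → t.Char → ℝ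
  | .leaf, s, c => @ite ℝ (c = s) (instDecidableEqBool c s) 1 0
  | .node p₁ p₂ t₁ t₂, s, c =>
      (∑ s₁ : Bool, transProb p₁ s s₁ * t₁.charProb s₁ c.1) *
      (∑ s₂ : Bool, transProb p₂ s s₂ * t₂.charProb s₂ c.2)

/-- The state set assigned to the root by Fitch's maximum parsimony
algorithm: a leaf in state `s` gets `{s}`; an internal node gets the
intersection of the children's state sets if nonempty, else their union. -/
def PTree.fitch : (t : PTree) → t.Char → Finset Bool
  | .leaf, c => {c}
  | .node _ _ t₁ t₂, c =>
      if (t₁.fitch c.1 ∩ t₂.fitch c.2).Nonempty then t₁.fitch c.1 ∩ t₂.fitch c.2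
      else t₁.fitch c.1 ∪ t₂.fitch c.2

/-- `P_α`: probability, conditional on the root being in state α, that MP
returns the state set `{α}`. -/
noncomputable def PTree.probAlpha (t : PTree) : ℝ :=
  ∑ c : t.Char, if t.fitch c = {true} then t.charProb true c else 0

/-- `P_β`: probability, conditional on the root being in state α, that MP
returns the state set `{β}`. -/
noncomputable def PTree.probBeta (t : PTree) : ℝ :=
  ∑ c : t.Char, if t.fitch c = {false} then t.charProb true c else 0

/-- `P_{αβ}`: probability, conditional on the root being in state α, that MP
returns the state set `{α, β}`. -/
noncomputable def PTree.probBoth (t : PTree) : ℝ :=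
  ∑ c : t.Char, if t.fitch c = ({true, false} : Finset Bool) then t.charProb true c else 0

/-- The reconstruction accuracy `RA = UA + AA/2` of maximum parsimony on all
leaves of `t`, the conditioning root state being the root of `t` itself. -/
noncomputable def PTree.RA (t : PTree) : ℝ := t.probAlpha + t.probBoth / 2

/-- Probability of the character `c` on `t` conditional on the state `s` of an
ancestor vertex joined to the root of `t` by an edge of substitution
probability `p`. -/
noncomputable def PTree.charProbVia (t : PTree) (p : ℝ) (s : Bool) (c : t.Char) : ℝ :=
  ∑ s' : Bool, transProb p s s' * t.charProb s' c

/-- Reconstruction accuracy of MP applied to the subtree `t` (rooted at `y`),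
where the ancestral state being estimated is that of a vertex `ρ` joined to
`y` by an edge of substitution probability `p`:
`RA = P(MP = {α} | ρ = α) + (1/2)·P(MP = {α,β} | ρ = α)`. -/
noncomputable def PTree.RAVia (t : PTree) (p : ℝ) : ℝ :=
  (∑ c : t.Char, if t.fitch c = {true} then t.charProbVia p true c else 0) +
  (∑ c : t.Char, if t.fitch c = ({true, false} : Finset Bool) then t.charProbVia p true c else 0) / 2

/-- All edge substitution probabilities lie in `[0, 1/2]`. -/
def PTree.valid : PTree → Prop
  | .leaf => True
  | .node p₁ p₂ t₁ t₂ => 0 ≤ p₁ ∧ p₁ ≤ 1/2 ∧ 0 ≤ p₂ ∧ p₂ ≤ 1/2 ∧ t₁.valid ∧ t₂.valid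

/-- The list of net substitution probabilities from the root to each leaf
(obtained by chaining the single-edge substitution probabilities). -/
def PTree.leafFlipProbs : PTree → List ℝ
  | .leaf => [0]
  | .node p₁ p₂ t₁ t₂ =>
      (t₁.leafFlipProbs.map fun r => (1 - p₁) * r + p₁ * (1 - r)) ++
      (t₂.leafFlipProbs.map fun r => (1 - p₂) * r + p₂ * (1 - r))

/-- The balanced binary tree of depth `n` with substitution probability `q`
on every edge. -/
def balanced (q : ℝ) : ℕ → PTree
  | 0 => .leaf
  | n + 1 => .node q q (balanced q n) (balanced q n)

/-- `P_α(n,q)` for the balanced tree of depth `n`. -/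
noncomputable def Palpha (n : ℕ) (q : ℝ) : ℝ := (balanced q n).probAlpha

/-- `P_β(n,q)` for the balanced tree of depth `n`. -/
noncomputable def Pbeta (n : ℕ) (q : ℝ) : ℝ := (balanced q n).probBeta

/-- `P_{αβ}(n,q)` for the balanced tree of depth `n`. -/
noncomputable def Palphabeta (n : ℕ) (q : ℝ) : ℝ := (balanced q n).probBoth

/-!
Write `a`, `b`, `z` for the probabilities that MP returns `{α}`, `{β}`, `{α, β}` on the balanced
tree of depth `n`. Splitting at the root and using the `α ↔ β` symmetry of the model, `d = a - b`
and `z` evolve by `d' = (1 - 2q)(1 + z) d` and `z' = z + E / 2`, where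
`E = (1 - z)(1 - 3z) - ((1 - 2q) d)²`. Since `a = (1 + d - z) / 2`, the bound is the value of `a` at
the fixed point `z = 2q / (1 - 2q)`, `E = 0`. From depth 2 on, the gap `G = 2q - (1 - 2q) z` stays
in `(0, 8q²(1 - q)]` and `0 ≤ E ≤ 2(1 - 4q) G`: the next excess is a convex quadratic in `E`, so
these bounds propagate once polynomial inequalities in `q` and `G` are checked at the endpoints
`E = 0` and `E = 2(1 - 4q) G`. The invariant gives `(1 - 2q)((1 - 2q) d + G) > √((1 - 8q)(1 - 4q))`,
which is the claim.
-/

open Finset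

theorem Fintype.sum_comp_mul_eq_sum_fiber {α β : Type*} [Fintype α] [Fintype β] [DecidableEq β]
    (f : α → β) (φ : β → ℝ) (w : α → ℝ) :
    ∑ a, φ (f a) * w a = ∑ b, φ b * ∑ a, if f a = b then w a else 0 := by
  simp only [mul_sum, mul_ite, mul_zero]
  rw [sum_comm]
  simp

theorem Fintype.sum_finset_bool (φ : Finset Bool → ℝ) :
    ∑ S, φ S = φ ∅ + φ {true} + φ {false} + φ {true, false} := by
  rw [show (univ : Finset (Finset Bool)) = {∅, {true}, {false}, {true, false}} by decide,
    sum_insert (by decide), sum_insert (by decide), sum_insert (by decide), sum_singleton]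
  ring

def fitchMerge (S₁ S₂ : Finset Bool) : Finset Bool :=
  if (S₁ ∩ S₂).Nonempty then S₁ ∩ S₂ else S₁ ∪ S₂

namespace PTree

noncomputable def fitchProb (t : PTree) (s : Bool) (S : Finset Bool) : ℝ :=
  ∑ c : t.Char, if t.fitch c = S then t.charProb s c else 0

noncomputable def fitchProbVia (t : PTree) (p : ℝ) (s : Bool) (S : Finset Bool) : ℝ :=
  ∑ c : t.Char, if t.fitch c = S then t.charProbVia p s c else 0

theorem fitch_node {p₁ p₂ : ℝ} {t₁ t₂ : PTree} (c : (node p₁ p₂ t₁ t₂).Char) :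
    (node p₁ p₂ t₁ t₂).fitch c = fitchMerge (t₁.fitch c.1) (t₂.fitch c.2) := rfl

theorem fitch_nonempty : ∀ (t : PTree) (c : t.Char), (t.fitch c).Nonempty
  | .leaf, c => singleton_nonempty c
  | .node _ _ t₁ _, c => by
    rw [fitch_node, fitchMerge]
    split_ifs with h
    · exact h
    · exact (fitch_nonempty t₁ c.1).mono subset_union_left

theorem fitchProbVia_empty (t : PTree) (p : ℝ) (s : Bool) : t.fitchProbVia p s ∅ = 0 := by
  simp [fitchProbVia, (fitch_nonempty t _).ne_empty]

theorem fitchProbVia_eq (t : PTree) (p : ℝ) (s : Bool) (S : Finset Bool) :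
    t.fitchProbVia p s S =
      transProb p s true * t.fitchProb true S + transProb p s false * t.fitchProb false S := by
  simp only [fitchProbVia, fitchProb, charProbVia, Fintype.sum_bool, mul_sum, ← sum_add_distrib]
  refine sum_congr rfl fun c _ => ?_
  split_ifs <;> ring

theorem fitchProb_leaf (s : Bool) (S : Finset Bool) :
    leaf.fitchProb s S = if S = {s} then 1 else 0 := by
  change ∑ c : Bool, (if ({c} : Finset Bool) = S then (if c = s then (1 : ℝ) else 0) else 0) = _
  cases s <;> simp +decide [eq_comm]

theorem fitchProb_node (p₁ p₂ : ℝ) (t₁ t₂ : PTree) (s : Bool) (S : Finset Bool) :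
    (node p₁ p₂ t₁ t₂).fitchProb s S = ∑ S₁, ∑ S₂,
      if fitchMerge S₁ S₂ = S then t₁.fitchProbVia p₁ s S₁ * t₂.fitchProbVia p₂ s S₂ else 0 := by
  let φ : Finset Bool → Finset Bool → ℝ := fun S₁ S₂ => if fitchMerge S₁ S₂ = S then 1 else 0
  calc (node p₁ p₂ t₁ t₂).fitchProb s S
      = ∑ c₁ : t₁.Char, ∑ c₂ : t₂.Char, if fitchMerge (t₁.fitch c₁) (t₂.fitch c₂) = S then
          t₁.charProbVia p₁ s c₁ * t₂.charProbVia p₂ s c₂ else 0 :=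
        Fintype.sum_prod_type _
    _ = ∑ c₁ : t₁.Char, (∑ c₂ : t₂.Char, φ (t₁.fitch c₁) (t₂.fitch c₂) * t₂.charProbVia p₂ s c₂)
          * t₁.charProbVia p₁ s c₁ := by
        simp only [φ, sum_mul, ite_mul, one_mul, zero_mul, mul_comm (t₂.charProbVia _ _ _)]
    _ = ∑ S₁, ∑ S₂, φ S₁ S₂ * (t₁.fitchProbVia p₁ s S₁ * t₂.fitchProbVia p₂ s S₂) := by
        simp only [Fintype.sum_comp_mul_eq_sum_fiber t₂.fitch, ← fitchProbVia.eq_1]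
        refine (Fintype.sum_comp_mul_eq_sum_fiber t₁.fitch
          (fun S₁ => ∑ S₂, φ S₁ S₂ * t₂.fitchProbVia p₂ s S₂) _).trans ?_
        simp only [← fitchProbVia.eq_1, sum_mul, mul_assoc, mul_comm (t₂.fitchProbVia _ _ _)]
    _ = _ := by simp only [φ, ite_mul, one_mul, zero_mul]

section node

variable (p₁ p₂ : ℝ) (t₁ t₂ : PTree) (s : Bool)

theorem fitchProb_node_true : (node p₁ p₂ t₁ t₂).fitchProb s {true} =
    t₁.fitchProbVia p₁ s {true} * t₂.fitchProbVia p₂ s {true} +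
    t₁.fitchProbVia p₁ s {true} * t₂.fitchProbVia p₂ s {true, false} +
    t₁.fitchProbVia p₁ s {true, false} * t₂.fitchProbVia p₂ s {true} := by
  simp +decide [fitchProb_node, Fintype.sum_finset_bool, fitchProbVia_empty]

theorem fitchProb_node_false : (node p₁ p₂ t₁ t₂).fitchProb s {false} =
    t₁.fitchProbVia p₁ s {false} * t₂.fitchProbVia p₂ s {false} +
    t₁.fitchProbVia p₁ s {false} * t₂.fitchProbVia p₂ s {true, false} +
    t₁.fitchProbVia p₁ s {true, false} * t₂.fitchProbVia p₂ s {false} := by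
  simp +decide [fitchProb_node, Fintype.sum_finset_bool, fitchProbVia_empty]

theorem fitchProb_node_both : (node p₁ p₂ t₁ t₂).fitchProb s {true, false} =
    t₁.fitchProbVia p₁ s {true, false} * t₂.fitchProbVia p₂ s {true, false} +
    t₁.fitchProbVia p₁ s {true} * t₂.fitchProbVia p₂ s {false} +
    t₁.fitchProbVia p₁ s {false} * t₂.fitchProbVia p₂ s {true} := by
  simp +decide [fitchProb_node, Fintype.sum_finset_bool, fitchProbVia_empty]
  ring

end node

theorem fitchProb_false : ∀ t : PTree,
    t.fitchProb false {true} = t.fitchProb true {false} ∧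
    t.fitchProb false {false} = t.fitchProb true {true} ∧
    t.fitchProb false {true, false} = t.fitchProb true {true, false}
  | .leaf => by simp +decide [fitchProb_leaf]
  | .node p₁ p₂ t₁ t₂ => by
    obtain ⟨a₁, b₁, z₁⟩ := fitchProb_false t₁
    obtain ⟨a₂, b₂, z₂⟩ := fitchProb_false t₂
    simp only [fitchProb_node_true, fitchProb_node_false, fitchProb_node_both, fitchProbVia_eq,
      transProb, Bool.true_eq_false, Bool.false_eq_true, ↓reduceIte, a₁, b₁, z₁, a₂, b₂, z₂]
    refine ⟨by ring, by ring, by ring⟩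

end PTree

open PTree

section Balanced

variable (q : ℝ) (n : ℕ)

theorem Palpha_eq : Palpha n q = (balanced q n).fitchProb true {true} := rfl

theorem Pbeta_eq : Pbeta n q = (balanced q n).fitchProb true {false} := rfl

theorem Palphabeta_eq : Palphabeta n q = (balanced q n).fitchProb true {true, false} := rfl

theorem Palpha_zero : Palpha 0 q = 1 := by simp [Palpha_eq, balanced, fitchProb_leaf]

theorem Pbeta_zero : Pbeta 0 q = 0 := by simp [Pbeta_eq, balanced, fitchProb_leaf]

theorem Palphabeta_zero : Palphabeta 0 q = 0 := by
  simp +decide [Palphabeta_eq, balanced, fitchProb_leaf]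

theorem fitchProbVia_balanced :
    (balanced q n).fitchProbVia q true {true} = (1 - q) * Palpha n q + q * Pbeta n q ∧
    (balanced q n).fitchProbVia q true {false} = (1 - q) * Pbeta n q + q * Palpha n q ∧
    (balanced q n).fitchProbVia q true {true, false} = Palphabeta n q := by
  obtain ⟨ha, hb, hz⟩ := fitchProb_false (balanced q n)
  simp only [fitchProbVia_eq, transProb, Bool.false_eq_true, ↓reduceIte, ha, hb, hz, Palpha_eq,
    Pbeta_eq, Palphabeta_eq, true_and]
  ring

theorem Palpha_succ : Palpha (n + 1) q =
    ((1 - q) * Palpha n q + q * Pbeta n q) ^ 2 +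
      2 * ((1 - q) * Palpha n q + q * Pbeta n q) * Palphabeta n q := by
  obtain ⟨ha, -, hz⟩ := fitchProbVia_balanced q n
  rw [Palpha_eq, balanced, fitchProb_node_true, ha, hz]
  ring

theorem Pbeta_succ : Pbeta (n + 1) q =
    ((1 - q) * Pbeta n q + q * Palpha n q) ^ 2 +
      2 * ((1 - q) * Pbeta n q + q * Palpha n q) * Palphabeta n q := by
  obtain ⟨-, hb, hz⟩ := fitchProbVia_balanced q n
  rw [Pbeta_eq, balanced, fitchProb_node_false, hb, hz]
  ring

theorem Palphabeta_succ : Palphabeta (n + 1) q = Palphabeta n q ^ 2 +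
      2 * ((1 - q) * Palpha n q + q * Pbeta n q) * ((1 - q) * Pbeta n q + q * Palpha n q) := by
  obtain ⟨ha, hb, hz⟩ := fitchProbVia_balanced q n
  rw [Palphabeta_eq, balanced, fitchProb_node_both, ha, hb, hz]
  ring

theorem Palpha_add_Pbeta_add_Palphabeta : Palpha n q + Pbeta n q + Palphabeta n q = 1 := by
  induction n with
  | zero => simp [Palpha_zero, Pbeta_zero, Palphabeta_zero]
  | succ n ih =>
    rw [Palpha_succ, Pbeta_succ, Palphabeta_succ]
    linear_combination (1 + Palpha n q + Pbeta n q + Palphabeta n q) * ih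

theorem Palpha_sub_Pbeta_succ : Palpha (n + 1) q - Pbeta (n + 1) q =
    (1 - 2 * q) * (1 + Palphabeta n q) * (Palpha n q - Pbeta n q) := by
  rw [Palpha_succ, Pbeta_succ]
  linear_combination (1 - 2 * q) * (Palpha n q - Pbeta n q) * Palpha_add_Pbeta_add_Palphabeta q n

theorem Palphabeta_succ_eq : Palphabeta (n + 1) q = Palphabeta n q ^ 2 +
      ((1 - Palphabeta n q) ^ 2 - ((1 - 2 * q) * (Palpha n q - Pbeta n q)) ^ 2) / 2 := by
  rw [Palphabeta_succ]
  linear_combination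
    (1 + Palpha n q + Pbeta n q - Palphabeta n q) / 2 * Palpha_add_Pbeta_add_Palphabeta q n

theorem Palpha_sub_Pbeta_two :
    Palpha 2 q - Pbeta 2 q = (1 - 2 * q) ^ 2 * (1 + 2 * q - 2 * q ^ 2) := by
  simp only [Palpha_sub_Pbeta_succ, Palphabeta_succ_eq, Palpha_zero, Pbeta_zero, Palphabeta_zero]
  ring

theorem Palphabeta_two : Palphabeta 2 q = 2 * q - 4 * q ^ 2 + 4 * q ^ 3 - 2 * q ^ 4 := by
  simp only [Palpha_sub_Pbeta_succ, Palphabeta_succ_eq, Palpha_zero, Pbeta_zero, Palphabeta_zero]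
  ring

end Balanced

theorem quadratic_nonneg_of_le_of_slope_nonpos {a b c M E : ℝ} (hc : 0 ≤ c)
    (hM : 0 ≤ a + b * M + c * M ^ 2) (hslope : b + 2 * c * M ≤ 0) (hE : E ≤ M) :
    0 ≤ a + b * E + c * E ^ 2 := by
  nlinarith [mul_nonneg (sub_nonneg.2 hE) (neg_nonneg.2 hslope),
    mul_nonneg hc (sq_nonneg (M - E))]

theorem quadratic_nonneg_of_concave {a b c M E : ℝ} (hc : c ≤ 0) (h0 : 0 ≤ a)
    (hM : 0 ≤ a + b * M + c * M ^ 2) (hE0 : 0 ≤ E) (hEM : E ≤ M) :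
    0 ≤ a + b * E + c * E ^ 2 := by
  rcases hE0.eq_or_lt with rfl | hE
  · simpa using h0
  have hM0 : 0 < M := hE.trans_le hEM
  refine nonneg_of_mul_nonneg_right ?_ hM0
  have hinterp : M * (a + b * E + c * E ^ 2) =
      (M - E) * a + E * (a + b * M + c * M ^ 2) + (-c) * (M * E * (M - E)) := by ring
  rw [hinterp]
  have := sub_nonneg.2 hEM
  have := neg_nonneg.2 hc
  positivity

/-- Distance of `(1 - 2q) z` from its fixed-point value `2q`. -/
def gap (q z : ℝ) : ℝ := 2 * q - (1 - 2 * q) * z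

/-- Twice the increment of `z` in one step of the recursion. -/
def excess (q d z : ℝ) : ℝ := (1 - z) * (1 - 3 * z) - ((1 - 2 * q) * d) ^ 2

/-- `(1 - 2q)²` times the next excess, as a function of the current gap `G` and excess `E`
(`excess_step`). -/
noncomputable def excessStep (q G E : ℝ) : ℝ :=
  G * (2 - G) * ((1 - 4 * q + G) * (1 - 8 * q + 3 * G)) +
    (1 - 2 * q) * ((1 - 2 * q) * (1 - G) ^ 2 + 6 * q - 3 * G - 2 * (1 - 2 * q)) * E +
    3 / 4 * (1 - 2 * q) ^ 2 * E ^ 2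

theorem gap_step (q d z : ℝ) :
    gap q (z ^ 2 + ((1 - z) ^ 2 - ((1 - 2 * q) * d) ^ 2) / 2) =
      gap q z - (1 - 2 * q) * excess q d z / 2 := by
  unfold excess gap
  ring

theorem excess_step (q d z : ℝ) :
    (1 - 2 * q) ^ 2 * excess q ((1 - 2 * q) * (1 + z) * d)
        (z ^ 2 + ((1 - z) ^ 2 - ((1 - 2 * q) * d) ^ 2) / 2) =
      excessStep q (gap q z) (excess q d z) := by
  unfold excess excessStep gap
  ring

structure FitchInvariant (q d z : ℝ) : Prop where
  diff_nonneg : 0 ≤ d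
  gap_pos : 0 < gap q z
  gap_le : gap q z ≤ 8 * q ^ 2 * (1 - q)
  excess_nonneg : 0 ≤ excess q d z
  excess_le : excess q d z ≤ 2 * (1 - 4 * q) * gap q z

def excessStepAtMax (q G : ℝ) : ℝ :=
  4 * q * (1 - 4 * q) * (1 - 8 * q) + 4 * q * G * (1 - q - 56 * q ^ 2 + 48 * q ^ 3) +
    G ^ 2 * (4 + 4 * q + 40 * q ^ 2 - 32 * q ^ 3 - 3 * G)

section excessStep

variable {q G E : ℝ}

theorem excessStep_at_max (q G : ℝ) :
    excessStep q G (2 * (1 - 4 * q) * G) = G * excessStepAtMax q G := by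
  unfold excessStep excessStepAtMax
  ring

theorem excessStepAtMax_nonneg (hq0 : 0 < q) (hq : q ≤ 1 / 8) (hG0 : 0 ≤ G)
    (hG : G ≤ 8 * q ^ 2 * (1 - q)) : 0 ≤ excessStepAtMax q G := by
  have : 0 ≤ 1 - q - 56 * q ^ 2 + 48 * q ^ 3 := by nlinarith
  have : 0 ≤ 4 + 4 * q + 40 * q ^ 2 - 32 * q ^ 3 - 3 * G := by nlinarith
  have : 0 ≤ 1 - 8 * q := by linarith
  have : 0 ≤ 1 - 4 * q := by linarith
  unfold excessStepAtMax
  positivity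

theorem excessStepAtMax_le (hq0 : 0 < q) (hq : q ≤ 1 / 8) (hG0 : 0 ≤ G)
    (hG : G ≤ 8 * q ^ 2 * (1 - q)) :
    excessStepAtMax q G ≤ 2 * (1 - 4 * q) * (6 * q - 8 * q ^ 2) * (1 - 2 * q) ^ 2 := by
  have h8 : 0 ≤ 1 - 8 * q := by linarith
  have hlin : 4 * q * G * (1 - q - 56 * q ^ 2 + 48 * q ^ 3) ≤ 32 * q ^ 3 := by
    have : 1 - q - 56 * q ^ 2 + 48 * q ^ 3 ≤ 1 := by nlinarith
    have : 4 * q * G ≤ 32 * q ^ 3 := by nlinarith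
    nlinarith [mul_nonneg hq0.le hG0]
  have hsq : G ^ 2 * (4 + 4 * q + 40 * q ^ 2 - 32 * q ^ 3 - 3 * G) ≤ 384 * q ^ 4 := by
    have : G ^ 2 ≤ (8 * q ^ 2) ^ 2 := pow_le_pow_left₀ hG0 (by nlinarith) 2
    have : 4 + 4 * q + 40 * q ^ 2 - 32 * q ^ 3 - 3 * G ≤ 6 := by nlinarith
    nlinarith
  unfold excessStepAtMax
  nlinarith [mul_nonneg hq0.le h8, pow_pos hq0 3, pow_pos hq0 4, mul_nonneg (pow_pos hq0 3).le h8]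

theorem excessStep_zero_le (hq0 : 0 < q) (hq : q ≤ 1 / 8) (hG0 : 0 ≤ G)
    (hG : G ≤ 8 * q ^ 2 * (1 - q)) :
    excessStep q G 0 ≤ (1 - 2 * q) ^ 2 * (2 * (1 - 4 * q) * G) := by
  have h8 : 0 ≤ 1 - 8 * q := by linarith
  have hlin : G * (7 - 28 * q - 32 * q ^ 2) ≤ 8 * q ^ 2 * (1 - q) * (7 - 28 * q - 32 * q ^ 2) :=
    mul_le_mul_of_nonneg_right hG (by nlinarith)
  have hsq : G ^ 2 * (2 + 20 * q) ≤ (8 * q ^ 2) ^ 2 * (2 + 20 * q) := by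
    have : G ^ 2 ≤ (8 * q ^ 2) ^ 2 := pow_le_pow_left₀ hG0 (by nlinarith) 2
    nlinarith
  have hcore : 8 * q ^ 2 * (1 - q) * (7 - 28 * q - 32 * q ^ 2) + (8 * q ^ 2) ^ 2 * (2 + 20 * q) ≤
      8 * q * ((1 - 4 * q) * (1 + q)) := by
    nlinarith [mul_nonneg hq0.le h8, pow_pos hq0 3, pow_pos hq0 4, mul_nonneg (pow_pos hq0 3).le h8]
  have hpoly : (2 - G) * ((1 - 4 * q + G) * (1 - 8 * q + 3 * G)) ≤
      2 * (1 - 4 * q) * (1 - 2 * q) ^ 2 := by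
    nlinarith [pow_pos hq0 3, pow_nonneg hG0 3]
  have hzero : excessStep q G 0 = G * ((2 - G) * ((1 - 4 * q + G) * (1 - 8 * q + 3 * G))) := by
    unfold excessStep; ring
  rw [hzero]
  nlinarith [mul_le_mul_of_nonneg_left hpoly hG0]

theorem excessStep_slope_at_max_nonpos (hq0 : 0 < q) (hq : q ≤ 1 / 8) (hG0 : 0 ≤ G)
    (hG : G ≤ 8 * q ^ 2 * (1 - q)) :
    (1 - 2 * q) * ((1 - 2 * q) * (1 - G) ^ 2 + 6 * q - 3 * G - 2 * (1 - 2 * q)) +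
      2 * (3 / 4 * (1 - 2 * q) ^ 2) * (2 * (1 - 4 * q) * G) ≤ 0 := by
  have hr : 0 ≤ 1 - 2 * q := by linarith
  have hG1 : G ≤ 1 := by nlinarith
  have : (1 - 2 * q) * (1 - G) ^ 2 + 6 * q - 3 * G - 2 * (1 - 2 * q) +
      3 * (1 - 2 * q) * (1 - 4 * q) * G ≤ 0 := by
    nlinarith [mul_nonneg hG0 (sub_nonneg.2 hG1), mul_nonneg hG0 hq0.le,
      mul_nonneg (mul_nonneg hG0 hq0.le) hq0.le]
  nlinarith [mul_nonpos_of_nonneg_of_nonpos hr this]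

theorem excessStep_nonneg (hq0 : 0 < q) (hq : q ≤ 1 / 8) (hG0 : 0 ≤ G)
    (hG : G ≤ 8 * q ^ 2 * (1 - q)) (hE : E ≤ 2 * (1 - 4 * q) * G) : 0 ≤ excessStep q G E := by
  have hmax : 0 ≤ excessStep q G (2 * (1 - 4 * q) * G) := by
    rw [excessStep_at_max]
    exact mul_nonneg hG0 (excessStepAtMax_nonneg hq0 hq hG0 hG)
  exact quadratic_nonneg_of_le_of_slope_nonpos (by positivity) hmax
    (excessStep_slope_at_max_nonpos hq0 hq hG0 hG) hE

theorem excessStep_le (hq0 : 0 < q) (hq : q ≤ 1 / 8) (hG0 : 0 ≤ G)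
    (hG : G ≤ 8 * q ^ 2 * (1 - q)) (hE0 : 0 ≤ E) (hE : E ≤ 2 * (1 - 4 * q) * G) :
    excessStep q G E ≤ (1 - 2 * q) ^ 2 * (2 * (1 - 4 * q) * (G - (1 - 2 * q) * E / 2)) := by
  have h0 := excessStep_zero_le hq0 hq hG0 hG
  have hM : excessStep q G (2 * (1 - 4 * q) * G) ≤
      (1 - 2 * q) ^ 2 * (2 * (1 - 4 * q) * (G - (1 - 2 * q) * (2 * (1 - 4 * q) * G) / 2)) := by
    rw [excessStep_at_max]
    nlinarith [mul_le_mul_of_nonneg_left (excessStepAtMax_le hq0 hq hG0 hG) hG0]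
  unfold excessStep at h0 hM ⊢
  have := quadratic_nonneg_of_concave
    (a := (1 - 2 * q) ^ 2 * (2 * (1 - 4 * q) * G) -
      G * (2 - G) * ((1 - 4 * q + G) * (1 - 8 * q + 3 * G)))
    (b := -(1 - 2 * q) ^ 3 * (1 - 4 * q) -
      (1 - 2 * q) * ((1 - 2 * q) * (1 - G) ^ 2 + 6 * q - 3 * G - 2 * (1 - 2 * q)))
    (c := -(3 / 4 * (1 - 2 * q) ^ 2)) (by nlinarith) (by linarith) (by linarith) hE0 hE
  linarith

end excessStep

namespace FitchInvariant

variable {q d z : ℝ}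

theorem step (hq0 : 0 < q) (hq : q ≤ 1 / 8) (h : FitchInvariant q d z) :
    FitchInvariant q ((1 - 2 * q) * (1 + z) * d)
      (z ^ 2 + ((1 - z) ^ 2 - ((1 - 2 * q) * d) ^ 2) / 2) := by
  obtain ⟨hd, hG0, hG, hE0, hE⟩ := h
  have hr : 0 < 1 - 2 * q := by linarith
  have hrr : (1 - 2 * q) * (1 - 4 * q) < 1 := by nlinarith
  have hdrift : (1 - 2 * q) * (1 + z) = 1 - gap q z := by unfold gap; ring
  have hE' := excessStep_le hq0 hq hG0.le hG hE0 hE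
  rw [← excess_step, ← gap_step] at hE'
  refine ⟨?_, ?_, ?_, ?_, ?_⟩
  · rw [hdrift]
    exact mul_nonneg (by nlinarith) hd
  · rw [gap_step]
    nlinarith [mul_le_mul_of_nonneg_left hE hr.le]
  · rw [gap_step]
    nlinarith [mul_nonneg hr.le hE0]
  · refine nonneg_of_mul_nonneg_right ?_ (pow_pos hr 2)
    rw [excess_step]
    exact excessStep_nonneg hq0 hq hG0.le hG hE
  · exact le_of_mul_le_mul_left (by linarith) (pow_pos hr 2)

theorem depth_two (hq0 : 0 < q) (hq : q < 1 / 8) :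
    FitchInvariant q ((1 - 2 * q) ^ 2 * (1 + 2 * q - 2 * q ^ 2))
      (2 * q - 4 * q ^ 2 + 4 * q ^ 3 - 2 * q ^ 4) := by
  have h8 : 0 ≤ 1 - 8 * q := by linarith
  have hgap : gap q (2 * q - 4 * q ^ 2 + 4 * q ^ 3 - 2 * q ^ 4) =
      2 * q ^ 2 * (4 - 6 * q + 5 * q ^ 2 - 2 * q ^ 3) := by unfold gap; ring
  have hexcess : excess q ((1 - 2 * q) ^ 2 * (1 + 2 * q - 2 * q ^ 2))
      (2 * q - 4 * q ^ 2 + 4 * q ^ 3 - 2 * q ^ 4) = q ^ 2 * (16 - 136 * q + 404 * q ^ 2 -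
        360 * q ^ 3 - 720 * q ^ 4 + 2256 * q ^ 5 - 2484 * q ^ 6 + 1280 * q ^ 7 - 256 * q ^ 8) := by
    unfold excess; ring
  have hq3 := pow_pos hq0 3
  refine ⟨?_, ?_, ?_, ?_, ?_⟩
  · have : 0 ≤ 1 + 2 * q - 2 * q ^ 2 := by nlinarith
    positivity
  · have : 0 < 4 - 6 * q + 5 * q ^ 2 - 2 * q ^ 3 := by nlinarith
    rw [hgap]; positivity
  · rw [hgap]; nlinarith
  · have : 0 ≤ 16 - 136 * q + 404 * q ^ 2 - 360 * q ^ 3 - 720 * q ^ 4 + 2256 * q ^ 5 -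
        2484 * q ^ 6 + 1280 * q ^ 7 - 256 * q ^ 8 := by
      nlinarith [mul_nonneg hq0.le h8, pow_pos hq0 5, pow_pos hq0 6, pow_pos hq0 7, pow_pos hq0 8,
        mul_nonneg hq3.le h8, mul_nonneg (pow_pos hq0 5).le h8, mul_nonneg (pow_pos hq0 7).le h8]
    rw [hexcess]; positivity
  · have : 0 ≤ 48 - 288 * q + 272 * q ^ 2 + 752 * q ^ 3 - 2256 * q ^ 4 + 2484 * q ^ 5 -
        1280 * q ^ 6 + 256 * q ^ 7 := by
      nlinarith [mul_nonneg hq0.le h8, pow_pos hq0 5, pow_pos hq0 6, pow_pos hq0 7,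
        mul_nonneg hq3.le h8, mul_nonneg (pow_pos hq0 5).le h8]
    rw [hexcess, hgap]
    linarith [mul_nonneg hq3.le this]

theorem fixedPoint_lt (hq0 : 0 < q) (hq : q < 1 / 8) (h : FitchInvariant q d z) :
    (1 / 2) * (1 - 2 * q / (1 - 2 * q) + √((1 - 8 * q) * (1 - 4 * q)) / (1 - 2 * q) ^ 2) <
      (1 + d - z) / 2 := by
  obtain ⟨hd, hG0, -, -, hE⟩ := h
  have hr : 0 < 1 - 2 * q := by linarith
  have hsqrt : √((1 - 8 * q) * (1 - 4 * q)) < (1 - 2 * q) * ((1 - 2 * q) * d + gap q z) := by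
    rw [Real.sqrt_lt' (by positivity), mul_pow]
    have hsq : (1 - 2 * q) ^ 2 * ((1 - 2 * q) * d + gap q z) ^ 2 - (1 - 8 * q) * (1 - 4 * q) =
        (1 - 2 * q) ^ 2 * (2 * (1 - 4 * q) * gap q z - excess q d z) +
          gap q z * (4 - 20 * q - 2 * (1 - 4 * q) * (1 - 2 * q) ^ 2) +
          gap q z ^ 2 * (3 + (1 - 2 * q) ^ 2) +
          2 * (1 - 2 * q) ^ 2 * ((1 - 2 * q) * d) * gap q z := by
      unfold excess gap; ring
    have h₁ : 0 ≤ 2 * (1 - 4 * q) * gap q z - excess q d z := sub_nonneg.2 hE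
    have h₂ : 0 < 4 - 20 * q - 2 * (1 - 4 * q) * (1 - 2 * q) ^ 2 := by nlinarith
    have h₃ : 0 ≤ gap q z ^ 2 * (3 + (1 - 2 * q) ^ 2) := by positivity
    have h₄ : 0 ≤ 2 * (1 - 2 * q) ^ 2 * ((1 - 2 * q) * d) * gap q z := by positivity
    linarith [mul_nonneg (sq_nonneg (1 - 2 * q)) h₁, mul_pos hG0 h₂]
  have hdiv : d - z + 2 * q / (1 - 2 * q) =
      (1 - 2 * q) * ((1 - 2 * q) * d + gap q z) / (1 - 2 * q) ^ 2 := by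
    unfold gap; field_simp; ring
  linarith [div_lt_div_of_pos_right hsqrt (pow_pos hr 2)]

end FitchInvariant

/-- For every integer `n ≥ 2` and every `q` with `0 < q < 1/8`,
`P_α(n,q)` exceeds `(1/2)·(1 − 2q/(1−2q) + √((1−8q)(1−4q))/(1−2q)²)`. -/
theorem stmt0 (n : ℕ) (hn : 2 ≤ n) (q : ℝ) (hq0 : 0 < q) (hq1 : q < 1/8) :
    Palpha n q >
      (1/2) * (1 - 2*q/(1-2*q) + Real.sqrt ((1-8*q)*(1-4*q)) / (1-2*q)^2) := by
  have hinv : FitchInvariant q (Palpha n q - Pbeta n q) (Palphabeta n q) := by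
    induction n, hn using Nat.le_induction with
    | base =>
      rw [Palpha_sub_Pbeta_two, Palphabeta_two]
      exact FitchInvariant.depth_two hq0 hq1
    | succ m _ ih =>
      rw [Palpha_sub_Pbeta_succ, Palphabeta_succ_eq]
      exact ih.step hq0 hq1.le
  have hsum := Palpha_add_Pbeta_add_Palphabeta q n
  linarith [hinv.fixedPoint_lt hq0 hq1]
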